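/- Let n \geq 1 be an integer and define h(p) = p^{-(p+1/2)} (p+n)^{p+n+1/2} for p \geq 1. Then h is strictly convex on [1, \infty); specifically, h''(p) > h(p)/(16 p^2 (p+n)^2) > 0 for all p \geq 1. -/

import Mathlib

/-!
On `(0, ∞)` we have `h = exp ∘ g` with `g p = (p + n + 1/2) log (p + n) - (p + 1/2) log p`,
so `h'' = (g'' + g'²) h`. The first two terms of the series of
`log ((1 + y) / (1 - y)) = 2 artanh y`, taken at `y = n / (2p + n)`, give a rational lower bound
`B ≤ g'` with `B ≥ 0`, and `g'' + B² - 1 / (16 p² (p + n)²)` is a rational function whose numerator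
has only positive coefficients as a polynomial in `n - 1` and `p - 1`.
A cruder bound such as `log (1 + u) ≥ u / (1 + u)` does not suffice: for `n = 1` one has
`g'' + g'² ~ 1 / (6 p⁴)`, which requires `log (1 + 1/p)` correct to third order.
-/

open Real Set

theorem two_mul_add_pow_three_le_log_div {a b : ℝ} (ha : 0 < a) (hab : a ≤ b) :
    2 * ((b - a) / (b + a) + ((b - a) / (b + a)) ^ 3 / 3) ≤ log (b / a) := by
  have hb : 0 < b + a := by linarith
  set y := (b - a) / (b + a) with hy
  have hy₀ : 0 ≤ y := div_nonneg (by linarith) hb.le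
  have hy₁ : y < 1 := (div_lt_one hb).2 (by linarith)
  have hratio : (1 + y) / (1 - y) = b / a := by
    rw [div_eq_div_iff (by linarith) ha.ne', hy]
    field_simp
    ring
  have := sum_range_le_log_div hy₀ hy₁ 2
  norm_num [Finset.sum_range_succ, hratio] at this
  linarith

theorem deriv_deriv_exp_comp {g g' g'' : ℝ → ℝ} {s : Set ℝ} (hs : IsOpen s)
    (hg : ∀ y ∈ s, HasDerivAt g (g' y) y) (hg' : ∀ y ∈ s, HasDerivAt g' (g'' y) y)
    {x : ℝ} (hx : x ∈ s) :
    deriv (deriv fun y => exp (g y)) x = (g'' x + g' x ^ 2) * exp (g x) := by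
  have hd : deriv (fun y => exp (g y)) =ᶠ[nhds x] fun y => exp (g y) * g' y :=
    Filter.eventually_of_mem (hs.mem_nhds hx) fun y hy => (hg y hy).exp.deriv
  rw [hd.deriv_eq, ((hg x hx).exp.fun_mul (hg' x hx)).deriv]
  ring

noncomputable def stirlingExponent (N x : ℝ) : ℝ :=
  (x + N + 1 / 2) * log (x + N) - (x + 1 / 2) * log x

noncomputable def stirlingExponentDeriv (N x : ℝ) : ℝ :=
  log (x + N) - log x + ((x + N)⁻¹ - x⁻¹) / 2

noncomputable def stirlingExponentDeriv2 (N x : ℝ) : ℝ :=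
  (x + N)⁻¹ - x⁻¹ + ((x ^ 2)⁻¹ - ((x + N) ^ 2)⁻¹) / 2

section StirlingExponent

variable {N x : ℝ}

theorem hasDerivAt_stirlingExponent (hx : x ≠ 0) (hxN : x + N ≠ 0) :
    HasDerivAt (stirlingExponent N) (stirlingExponentDeriv N x) x := by
  have hshift : HasDerivAt (fun y => y + N) 1 x := (hasDerivAt_id x).add_const N
  have := ((hshift.add_const (1 / 2)).mul ((hasDerivAt_log hxN).comp x hshift)).sub
    (((hasDerivAt_id x).add_const (1 / 2)).mul (hasDerivAt_log hx))
  refine (show HasDerivAt (stirlingExponent N) _ x from this).congr_deriv ?_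
  simp only [stirlingExponentDeriv, Function.comp_apply, id]
  field_simp
  ring

theorem hasDerivAt_stirlingExponentDeriv (hx : x ≠ 0) (hxN : x + N ≠ 0) :
    HasDerivAt (stirlingExponentDeriv N) (stirlingExponentDeriv2 N x) x := by
  have hshift : HasDerivAt (fun y => y + N) 1 x := (hasDerivAt_id x).add_const N
  have := (((hasDerivAt_log hxN).comp x hshift).sub (hasDerivAt_log hx)).add
    (((hshift.inv hxN).sub (hasDerivAt_inv hx)).div_const 2)
  refine (show HasDerivAt (stirlingExponentDeriv N) _ x from this).congr_deriv ?_
  simp only [stirlingExponentDeriv2]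
  field_simp
  ring

theorem deriv_deriv_exp_stirlingExponent (hN : 0 ≤ N) (hx : 0 < x) :
    deriv (deriv fun y => exp (stirlingExponent N y)) x =
      (stirlingExponentDeriv2 N x + stirlingExponentDeriv N x ^ 2) *
        exp (stirlingExponent N x) :=
  deriv_deriv_exp_comp isOpen_Ioi
    (fun y (hy : 0 < y) => hasDerivAt_stirlingExponent hy.ne' (by positivity))
    (fun y (hy : 0 < y) => hasDerivAt_stirlingExponentDeriv hy.ne' (by positivity)) hx

theorem rpow_eventuallyEq_exp_stirlingExponent (hN : 0 ≤ N) (hx : 0 < x) :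
    (fun p : ℝ => p ^ (-(p + 1 / 2)) * (p + N) ^ (p + N + 1 / 2)) =ᶠ[nhds x]
      fun p => exp (stirlingExponent N p) :=
  Filter.eventually_of_mem (isOpen_Ioi.mem_nhds hx) fun p (hp : 0 < p) => by
    have hpN : 0 < p + N := by positivity
    dsimp only
    rw [rpow_def_of_pos hp, rpow_def_of_pos hpN, ← exp_add, stirlingExponent]
    ring_nf

end StirlingExponent

section Certificates

variable {N s : ℝ}

theorem stirling_numerator_nonneg (hN : 0 ≤ N) (hs : N + 2 ≤ s) :
    0 ≤ 3 * s ^ 4 - 3 * s ^ 3 - 2 * s ^ 2 * N ^ 2 - N ^ 4 := by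
  obtain ⟨c, hc, rfl⟩ : ∃ c, 0 ≤ c ∧ s = N + 2 + c := ⟨s - N - 2, by linarith, by ring⟩
  ring_nf
  positivity

theorem stirling_gap_numerator_pos (hN : 1 ≤ N) (hs : N + 2 ≤ s) :
    9 * s ^ 6 * (4 * N * (s ^ 2 - N ^ 2) - 8 * N * s + 1) <
      4 * N ^ 2 * (3 * s ^ 4 - 3 * s ^ 3 - 2 * s ^ 2 * N ^ 2 - N ^ 4) ^ 2 := by
  obtain ⟨c, hc, rfl⟩ : ∃ c, 0 ≤ c ∧ s = N + 2 + c := ⟨s - N - 2, by linarith, by ring⟩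
  obtain ⟨b, hb, rfl⟩ : ∃ b, 0 ≤ b ∧ N = b + 1 := ⟨N - 1, by linarith, by ring⟩
  rw [← sub_pos]
  ring_nf
  positivity

end Certificates

theorem lt_stirlingExponentDeriv2_add_sq {N x : ℝ} (hN : 1 ≤ N) (hx : 1 ≤ x) :
    1 / (16 * x ^ 2 * (x + N) ^ 2) <
      stirlingExponentDeriv2 N x + stirlingExponentDeriv N x ^ 2 := by
  have hx₀ : x ≠ 0 := by positivity
  have hxN : x + N ≠ 0 := by positivity
  set s := 2 * x + N with hs
  have hs₀ : s ≠ 0 := by positivity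
  set R := 3 * s ^ 4 - 3 * s ^ 3 - 2 * s ^ 2 * N ^ 2 - N ^ 4 with hR
  set B := 2 * (N / s + (N / s) ^ 3 / 3) + ((x + N)⁻¹ - x⁻¹) / 2 with hB
  have hB_le : B ≤ stirlingExponentDeriv N x := by
    have hlog := two_mul_add_pow_three_le_log_div (a := x) (b := x + N) (by positivity)
      (by linarith)
    rw [log_div hxN hx₀, show x + N - x = N by ring, show x + N + x = s by ring] at hlog
    rw [stirlingExponentDeriv]
    linarith
  have hB_eq : B = N * R / (6 * s ^ 3 * (x * (x + N))) := by
    rw [hB, hR, hs]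
    field_simp
    ring
  have hB_nonneg : 0 ≤ B := by
    have := stirling_numerator_nonneg (N := N) (s := s) (by linarith) (by linarith)
    rw [hB_eq]
    positivity
  have hgap : stirlingExponentDeriv2 N x + B ^ 2 - 1 / (16 * x ^ 2 * (x + N) ^ 2) =
      (4 * N ^ 2 * R ^ 2 - 9 * s ^ 6 * (4 * N * (s ^ 2 - N ^ 2) - 8 * N * s + 1)) /
        (144 * s ^ 6 * x ^ 2 * (x + N) ^ 2) := by
    rw [hB_eq, stirlingExponentDeriv2, hs]
    field_simp
    ring
  have hgap_pos : 0 < stirlingExponentDeriv2 N x + B ^ 2 - 1 / (16 * x ^ 2 * (x + N) ^ 2) := by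
    have := stirling_gap_numerator_pos (N := N) (s := s) hN (by linarith)
    rw [hgap]
    exact div_pos (by linarith) (by positivity)
  calc 1 / (16 * x ^ 2 * (x + N) ^ 2) < stirlingExponentDeriv2 N x + B ^ 2 := by linarith
    _ ≤ stirlingExponentDeriv2 N x + stirlingExponentDeriv N x ^ 2 := by gcongr

/-- The Stirling-approximated binomial growth function
`h(p) = p^{-(p+1/2)} (p+n)^{p+n+1/2}` is strictly convex on `[1,∞)`; in fact
`h''(p) > h(p)/(16 p² (p+n)²) > 0` for all `p ≥ 1`. -/
theorem stirling_h_strict_convex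
    (n : ℕ) (hn : 1 ≤ n)
    (h : ℝ → ℝ)
    (hh : h = fun p => p ^ (-(p + 1/2)) * (p + n) ^ (p + (n : ℝ) + 1/2)) :
    StrictConvexOn ℝ (Ici 1) h ∧
      ∀ p : ℝ, 1 ≤ p →
        h p / (16 * p ^ 2 * (p + n) ^ 2) < deriv (deriv h) p ∧
        0 < h p / (16 * p ^ 2 * (p + n) ^ 2) := by
  have hN : (1 : ℝ) ≤ n := by exact_mod_cast hn
  have hloc : ∀ p : ℝ, 0 < p → h =ᶠ[nhds p] fun y => exp (stirlingExponent n y) := fun p hp => by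
    rw [hh]
    exact rpow_eventuallyEq_exp_stirlingExponent (by positivity) hp
  have hbounds : ∀ p : ℝ, 1 ≤ p → 0 < h p / (16 * p ^ 2 * (p + n) ^ 2) ∧
      h p / (16 * p ^ 2 * (p + n) ^ 2) < deriv (deriv h) p := fun p hp => by
    have hp₀ : 0 < p := by linarith
    rw [(hloc p hp₀).deriv.deriv_eq, deriv_deriv_exp_stirlingExponent (by positivity) hp₀,
      (hloc p hp₀).eq_of_nhds, div_eq_inv_mul, ← one_div]
    exact ⟨by positivity,
      mul_lt_mul_of_pos_right (lt_stirlingExponentDeriv2_add_sq hN hp) (exp_pos _)⟩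
  refine ⟨strictConvexOn_of_deriv2_pos (convex_Ici 1) ?_ ?_, fun p hp => (hbounds p hp).symm⟩
  · intro p (hp : 1 ≤ p)
    have hp₀ : 0 < p := by linarith
    exact ((hasDerivAt_stirlingExponent hp₀.ne' (by positivity)).exp.differentiableAt
      |>.congr_of_eventuallyEq (hloc p hp₀)).continuousAt.continuousWithinAt
  · intro p hp
    rw [interior_Ici] at hp
    simpa using (hbounds p hp.le).1.trans (hbounds p hp.le).2
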